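/- arXiv:1712.07222 — 3 statements merged into one kernel-verified Lean document; each statement's English description precedes it below -/
import Mathlib

section
/- Let x be a binary string and let y be obtained from x by deleting a single symbol. If the string 0000 is not preserved from x to y, then the string 1111 is preserved from x to y. -/
/-- Delete from `x` the symbols at the positions in `S`. -/
def deleteIdxs (x : List Bool) (S : Finset ℕ) : List Bool :=
  ((List.range x.length).filter (fun i => decide (i ∉ S))).map (fun i => x.getD i false)

/-- `w` occurs in `x` at position `i`. -/
def occursAt (w x : List Bool) (i : ℕ) : Prop := w <+: x.drop i

/-- The number of (possibly overlapping) occurrences of `w` in `x`. -/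
def Nw (w x : List Bool) : ℕ :=
  ((Finset.range x.length).filter (fun i => w <+: x.drop i)).card

/-- The position in the shortened string of the junction produced by deleting position `k`. -/
def junction (S : Finset ℕ) (k : ℕ) : ℕ :=
  ((Finset.range k).filter (fun m => m ∉ S)).card

/-- `w` is preserved from `x` to `y`: some set `S` of deleted positions realizing `y`
destroys no occurrence of `w` in `x` and no occurrence of `w` in `y` spans a junction. -/
def Preserved (w x y : List Bool) : Prop :=
  ∃ S : Finset ℕ,
    (∀ k ∈ S, k < x.length) ∧
    S.card + y.length = x.length ∧
    deleteIdxs x S = y ∧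
    (∀ i, occursAt w x i → ∀ k ∈ S, ¬ (i ≤ k ∧ k < i + w.length)) ∧
    (∀ j, occursAt w y j → ∀ k ∈ S, ¬ (j < junction S k ∧ junction S k < j + w.length))

/-- `x` has a (maximal) run of length `ℓ` starting at position `i`. -/
def runAt (x : List Bool) (i ℓ : ℕ) : Prop :=
  0 < ℓ ∧ i + ℓ ≤ x.length ∧
  (∀ j, i ≤ j → j < i + ℓ → x.getD j false = x.getD i false) ∧
  (i = 0 ∨ x.getD (i - 1) false ≠ x.getD i false) ∧
  (i + ℓ = x.length ∨ x.getD (i + ℓ) false ≠ x.getD i false)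

/-- position `k` of `x` lies in a run of length `ℓ`. -/
def inRun (x : List Bool) (k ℓ : ℕ) : Prop := ∃ i, runAt x i ℓ ∧ i ≤ k ∧ k < i + ℓ

def w0000 : List Bool := [false, false, false, false]
def w1111 : List Bool := [true, true, true, true]
def w11011 : List Bool := [true, true, false, true, true]
def w110011 : List Bool := [true, true, false, false, true, true]

/-- The set of strings obtainable from `x` by deleting two symbols. -/
def D2 (x : List Bool) : Set (List Bool) :=
  { y | ∃ i j : ℕ, i < j ∧ j < x.length ∧ y = deleteIdxs x ({i, j} : Finset ℕ) }

/-- run-length representation of the runs of ones, in order. -/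
def tau1 (x : List Bool) : List ℕ :=
  ((x.splitBy (· == ·)).filter (fun r => r.headD false)).map List.length

/-- the subsequence of `tau1` of entries at least 2. -/
def tauGe2 (x : List Bool) : List ℕ := (tau1 x).filter (fun ℓ => decide (2 ≤ ℓ))

/-- sum of the odd-indexed entries. -/
def oddIdxSum (l : List ℕ) : ℕ :=
  ((Finset.range l.length).filter (fun i => i % 2 = 1)).sum (fun i => l.getD i 0)

/-!
Let `s` be the deleted symbol. If `s` has a neighbour equal to `s`, the same `y` is obtained by
deleting the left one of two adjacent copies of `s`; that position lies in no occurrence of the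
constant word over `!s`, and the junction sits just before a copy of `s`, so that word is preserved.
If `s` is isolated, no occurrence of `s s` contains it and the junction sits just after a symbol
different from `s`, so the constant word over `s` is preserved.
-/

open List

theorem map_getD_range (x : List Bool) : (range x.length).map (fun i => x.getD i false) = x :=
  ext_getElem (by simp) fun i _ hi => by simp [getElem?_eq_getElem hi]

theorem deleteIdxs_singleton {x : List Bool} {k : ℕ} (hk : k < x.length) :
    deleteIdxs x {k} = x.eraseIdx k := by
  have hidx : (range x.length).idxOf k = k := by
    have := nodup_range.idxOf_getElem k (by simpa using hk)
    rwa [getElem_range] at this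
  have hfilter : (range x.length).filter (fun i => decide (i ∉ ({k} : Finset ℕ))) =
      (range x.length).erase k := by
    rw [nodup_range.erase_eq_filter]
    exact filter_congr fun i _ => by simp [bne, _root_.beq_eq_decide]
  rw [deleteIdxs, hfilter, erase_eq_eraseIdx_of_idxOf hidx, ← eraseIdx_map, map_getD_range]

theorem eraseIdx_eq_eraseIdx_succ_of_getElem?_eq {α : Type*} {l : List α} {k : ℕ}
    (h : l[k]? = l[k + 1]?) : l.eraseIdx k = l.eraseIdx (k + 1) := by
  refine ext_getElem? fun i => ?_
  rcases lt_trichotomy i k with hi | rfl | hi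
  · rw [getElem?_eraseIdx_of_lt hi, getElem?_eraseIdx_of_lt (by omega)]
  · rw [getElem?_eraseIdx_of_ge le_rfl, getElem?_eraseIdx_of_lt (by omega), h]
  · rw [getElem?_eraseIdx_of_ge hi.le, getElem?_eraseIdx_of_ge hi]

theorem getElem?_of_occursAt_replicate {n : ℕ} {b : Bool} {z : List Bool} {j : ℕ}
    (h : occursAt (replicate n b) z j) {t : ℕ} (hjt : j ≤ t) (htn : t < j + n) :
    z[t]? = some b := by
  obtain ⟨r, hr⟩ := h
  have : (z.drop j)[t - j]? = some b := by
    rw [← hr, getElem?_append_left (by simp; omega), getElem?_replicate_of_lt (by omega)]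
  rwa [getElem?_drop, Nat.add_sub_cancel' hjt] at this

theorem preserved_eraseIdx {w x : List Bool} {k : ℕ} (hk : k < x.length)
    (hx : ∀ i, occursAt w x i → ¬(i ≤ k ∧ k < i + w.length))
    (hy : ∀ j, occursAt w (x.eraseIdx k) j → ¬(j < k ∧ k < j + w.length)) :
    Preserved w x (x.eraseIdx k) := by
  have hjunction : junction {k} k = k := by
    rw [junction, Finset.filter_true_of_mem fun m hm => by simp at hm ⊢; omega, Finset.card_range]
  refine ⟨{k}, by simpa using hk, ?_, deleteIdxs_singleton hk, ?_, ?_⟩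
  · rw [length_eraseIdx_of_lt hk, Finset.card_singleton]; omega
  · simpa using hx
  · simpa [hjunction] using hy

theorem preserved_replicate_not_eraseIdx_of_getElem?_succ {x : List Bool} {k : ℕ} {s : Bool}
    (hs : x[k]? = some s) (hs' : x[k + 1]? = some s) (n : ℕ) :
    Preserved (replicate n (!s)) x (x.eraseIdx k) := by
  refine preserved_eraseIdx (List.getElem?_eq_some_iff.mp hs).1 ?_ ?_ <;>
    simp only [length_replicate]
  · rintro i hi ⟨hik, hkn⟩
    simpa [hs] using getElem?_of_occursAt_replicate hi hik hkn
  · rintro j hj ⟨hjk, hkn⟩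
    simpa [getElem?_eraseIdx_of_ge, hs'] using getElem?_of_occursAt_replicate hj hjk.le hkn

theorem preserved_replicate_eraseIdx_of_isolated {x : List Bool} {k : ℕ} (hk : k < x.length)
    {s : Bool} (hr : x[k + 1]? ≠ some s) (hl : ∀ j, j + 1 = k → x[j]? ≠ some s) {n : ℕ}
    (hn : 2 ≤ n) : Preserved (replicate n s) x (x.eraseIdx k) := by
  refine preserved_eraseIdx hk ?_ ?_ <;> simp only [length_replicate]
  · rintro i hi ⟨hik, hkn⟩
    rcases hik.lt_or_eq with hik | rfl
    · exact hl (k - 1) (by omega) (getElem?_of_occursAt_replicate hi (by omega) (by omega))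
    · exact hr (getElem?_of_occursAt_replicate hi (by omega) (by omega))
  · rintro j hj ⟨hjk, hkn⟩
    have := getElem?_of_occursAt_replicate hj (t := k - 1) (by omega) (by omega)
    rw [getElem?_eraseIdx_of_lt (by omega)] at this
    exact hl (k - 1) (by omega) this

theorem exists_preserved_replicate_eraseIdx {x : List Bool} {k : ℕ} (hk : k < x.length)
    {n : ℕ} (hn : 2 ≤ n) : ∃ b, Preserved (replicate n b) x (x.eraseIdx k) := by
  have hs : x[k]? = some x[k] := getElem?_eq_getElem hk
  by_cases hr : x[k + 1]? = some x[k]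
  · exact ⟨_, preserved_replicate_not_eraseIdx_of_getElem?_succ hs hr n⟩
  by_cases hl : ∃ j, j + 1 = k ∧ x[j]? = some x[k]
  · obtain ⟨j, rfl, hj⟩ := hl
    rw [← eraseIdx_eq_eraseIdx_succ_of_getElem?_eq (hj.trans hs.symm)]
    exact ⟨_, preserved_replicate_not_eraseIdx_of_getElem?_succ hj hs n⟩
  · push Not at hl
    exact ⟨_, preserved_replicate_eraseIdx_of_isolated hk hr hl hn⟩

/-- After a single deletion, if `0000` is not preserved then `1111` is preserved. -/
theorem single_deletion_0000_or_1111 (x y : List Bool) (k : ℕ) (hk : k < x.length)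
    (hy : y = deleteIdxs x ({k} : Finset ℕ))
    (h : ¬ Preserved w0000 x y) :
    Preserved w1111 x y := by
  subst hy
  rw [deleteIdxs_singleton hk] at h ⊢
  obtain ⟨b, hb⟩ := exists_preserved_replicate_eraseIdx hk (n := 4) (by norm_num)
  cases b
  · exact absurd hb h
  · exact hb
end

section
/- Let y be obtained from a binary string x by deleting one symbol equal to 0 and one symbol equal to 1. If N_{1111}(x) − N_{1111}(y) ≡ 1 (mod 7) and N_{0000}(x) ≡ N_{0000}(y) (mod 7), then the string 0000 is preserved from x to y. -/
/-!
Let `T_w` be the occurrences of `w` in `x` that contain a deleted position and `S_w` the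
occurrences of `w` in `y` that span a junction. Every other occurrence in `x` shifts to one in
`y` and back, so `N_w(x) + |S_w| = N_w(y) + |T_w|`.

For `w = 0000` only the deleted `0` can be touched, so `|T| ≤ 4`, and the hypothesis gives
`|T| ≡ |S| (mod 7)`. A `0000` of `y` across the junction of the deleted `1` makes that `1` isolated
in `x`: then no `1111` is destroyed and at most three are created, contradicting
`N₁₁₁₁(x) - N₁₁₁₁(y) ≡ 1`. A `0000` of `y` across the junction of the deleted `0` comes from a run
of five `0`s of `x` around it, which holds two occurrences touching the `0`; shifting all of them
back gives `|S| < |T| ≤ 4`, impossible mod 7. So `S = ∅`, hence `T = ∅`: `0000` is preserved.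
-/

theorem length_deleteIdxs (x : List Bool) (S : Finset ℕ) :
    (deleteIdxs x S).length = junction S x.length := by
  simp only [deleteIdxs, List.length_map]
  rfl

theorem junction_add_card_filter_lt (S : Finset ℕ) (m : ℕ) :
    junction S m + (S.filter (· < m)).card = m := by
  have h := Finset.card_filter_add_card_filter_not (s := Finset.range m) (p := (· ∉ S))
  have hfilter : (Finset.range m).filter (fun i => ¬ i ∉ S) = S.filter (· < m) := by
    ext i; simp [and_comm]
  rw [hfilter, Finset.card_range] at h
  exact h

/-- For an undeleted position `m`, `junction S m` is the position of `x[m]` in the shortened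
string. -/
theorem getD_deleteIdxs_junction {x : List Bool} {S : Finset ℕ} {m : ℕ} (hm : m ∉ S)
    (hmx : m < x.length) :
    (deleteIdxs x S).getD (junction S m) false = x.getD m false := by
  obtain ⟨r, hr⟩ : ∃ r, x.length = m + (r + 1) := ⟨x.length - m - 1, by omega⟩
  have hsplit : List.range x.length = List.range m ++ m :: (List.range r).map (m + 1 + ·) := by
    rw [hr, List.range_add, List.range_succ_eq_map]
    simp [Function.comp_def, Nat.add_assoc, Nat.add_comm 1]
  have hj : junction S m = ((List.range m).filter (fun i => decide (i ∉ S))).length := rfl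
  rw [deleteIdxs, hsplit, hj, List.filter_append, List.map_append, List.getD_eq_getElem?_getD,
    List.getElem?_append_right (by simp)]
  simp [hm]

theorem junction_succ (S : Finset ℕ) (m : ℕ) :
    junction S (m + 1) = junction S m + if m ∈ S then 0 else 1 := by
  rw [junction, Finset.range_add_one, Finset.filter_insert]
  split_ifs with h
  · rfl
  · rw [Finset.card_insert_of_notMem (by simp), junction]

theorem junction_add {S : Finset ℕ} {i t : ℕ} (h : ∀ s < t, i + s ∉ S) :
    junction S (i + t) = junction S i + t := by
  induction t with
  | zero => rfl
  | succ t ih =>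
    rw [← Nat.add_assoc, junction_succ, if_neg (h t (by omega)), ih fun s hs => h s (by omega),
      Nat.add_assoc]

theorem junction_pair_of_lt {a b : ℕ} (hab : a < b) (m : ℕ) :
    (m ≤ a → junction {a, b} m = m) ∧ (a < m → m ≤ b → junction {a, b} m = m - 1) ∧
      (b < m → junction {a, b} m = m - 2) := by
  have h := junction_add_card_filter_lt {a, b} m
  rw [Finset.filter_insert, Finset.filter_singleton] at h
  split_ifs at h <;> simp [Finset.card_insert_of_notMem, hab.ne] at h <;> omega

theorem length_deleteIdxs_pair {x : List Bool} {k₀ k₁ : ℕ} (hne : k₀ ≠ k₁)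
    (h₀ : k₀ < x.length) (h₁ : k₁ < x.length) :
    (deleteIdxs x {k₀, k₁}).length = x.length - 2 := by
  wlog hlt : k₀ < k₁ generalizing k₀ k₁
  · rw [Finset.pair_comm]
    exact this hne.symm h₁ h₀ (by omega)
  rw [length_deleteIdxs]
  have := junction_pair_of_lt hlt x.length
  omega

theorem junction_pair_self {k₀ k₁ : ℕ} (hne : k₀ ≠ k₁) :
    (k₀ < k₁ ∧ junction {k₀, k₁} k₀ = k₀ ∧ junction {k₀, k₁} k₁ = k₁ - 1) ∨
      (k₁ < k₀ ∧ junction {k₀, k₁} k₀ = k₀ - 1 ∧ junction {k₀, k₁} k₁ = k₁) := by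
  rcases Nat.lt_or_gt_of_ne hne with h | h
  · exact .inl ⟨h, (junction_pair_of_lt h k₀).1 le_rfl, (junction_pair_of_lt h k₁).2.1 h le_rfl⟩
  · rw [Finset.pair_comm]
    exact .inr ⟨h, (junction_pair_of_lt h k₀).2.1 h le_rfl, (junction_pair_of_lt h k₁).1 le_rfl⟩

theorem occursAt_iff_getD {w x : List Bool} {i : ℕ} (hw : w ≠ []) :
    occursAt w x i ↔
      i + w.length ≤ x.length ∧ ∀ t < w.length, x.getD (i + t) false = w.getD t false := by
  have hw' := List.length_pos_iff.mpr hw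
  rw [occursAt, List.prefix_iff_getElem]
  constructor
  · rintro ⟨hlen, h⟩
    rw [List.length_drop] at hlen
    refine ⟨by omega, fun t ht => ?_⟩
    rw [List.getD_eq_getElem _ _ ht, List.getD_eq_getElem _ _ (by omega), h t ht,
      List.getElem_drop]
  · rintro ⟨hlen, h⟩
    refine ⟨by rw [List.length_drop]; omega, fun t ht => ?_⟩
    have := h t ht
    rw [List.getD_eq_getElem _ _ ht, List.getD_eq_getElem _ _ (by omega)] at this
    rw [List.getElem_drop, this]

theorem occursAt_replicate_iff {x : List Bool} {L i : ℕ} {v : Bool} (hL : 0 < L) :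
    occursAt (List.replicate L v) x i ↔
      i + L ≤ x.length ∧ ∀ m, i ≤ m → m < i + L → x.getD m false = v := by
  rw [occursAt_iff_getD (by simp; omega), List.length_replicate]
  refine and_congr_right fun _ => ⟨fun h m hm hm' => ?_, fun h t ht => ?_⟩
  · obtain ⟨t, rfl⟩ := Nat.exists_eq_add_of_le hm
    rw [h t (by omega), List.getD_replicate _ (by omega)]
  · rw [h (i + t) (by omega) (by omega), List.getD_replicate _ ht]

theorem junction_mono (S : Finset ℕ) : Monotone (junction S) := fun _ _ h =>
  Finset.card_le_card (Finset.filter_subset_filter _ (Finset.range_subset_range.mpr h))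

theorem occursAt_deleteIdxs_junction_iff {w x : List Bool} {S : Finset ℕ} {i : ℕ} (hw : w ≠ [])
    (hx : i + w.length ≤ x.length) (hS : ∀ t < w.length, i + t ∉ S) :
    occursAt w (deleteIdxs x S) (junction S i) ↔ occursAt w x i := by
  have hadd : ∀ t ≤ w.length, junction S (i + t) = junction S i + t := fun t ht =>
    junction_add fun s hs => hS s (by omega)
  have hy : junction S i + w.length ≤ (deleteIdxs x S).length := by
    rw [length_deleteIdxs, ← hadd _ le_rfl]
    exact junction_mono S hx
  simp only [occursAt_iff_getD hw, hx, hy, true_and]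
  refine forall₂_congr fun t ht => ?_
  rw [← hadd t ht.le, getD_deleteIdxs_junction (hS t ht) (by omega)]

instance (w x : List Bool) : DecidablePred (occursAt w x) :=
  fun i => inferInstanceAs (Decidable (w <+: x.drop i))

def occurrences (w x : List Bool) : Finset ℕ := (Finset.range x.length).filter (occursAt w x)

theorem Nw_eq_card_occurrences (w x : List Bool) : Nw w x = (occurrences w x).card := rfl

theorem mem_occurrences {w x : List Bool} {i : ℕ} :
    i ∈ occurrences w x ↔ i < x.length ∧ occursAt w x i := by
  simp [occurrences]

def touchingAt (w x : List Bool) (k : ℕ) : Finset ℕ :=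
  (occurrences w x).filter fun i => i ≤ k ∧ k < i + w.length

def spanningAt (w y : List Bool) (u : ℕ) : Finset ℕ :=
  (occurrences w y).filter fun j => j < u ∧ u < j + w.length

theorem card_filter_occurrences_deleteIdxs_pair {w x : List Bool} {a b : ℕ} (hw : w ≠ [])
    (hab : a < b) (hb : b < x.length) :
    ((occurrences w x).filter fun i =>
        ¬((i ≤ a ∧ a < i + w.length) ∨ (i ≤ b ∧ b < i + w.length))).card =
      ((occurrences w (deleteIdxs x {a, b})).filter fun j =>
        ¬((j < a ∧ a < j + w.length) ∨ (j < b - 1 ∧ b - 1 < j + w.length))).card := by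
  have hy : (deleteIdxs x {a, b}).length = x.length - 2 :=
    length_deleteIdxs_pair hab.ne (by omega) hb
  have hw' : 0 < w.length := List.length_pos_iff.mpr hw
  have hJ := junction_pair_of_lt hab
  -- the inverse of `junction {a, b}` off `{a, b}`
  refine Finset.card_nbij' (junction {a, b})
    (fun j => if j < a then j else if j + 1 < b then j + 1 else j + 2) ?_ ?_ ?_ ?_
  · intro i hi
    simp only [Finset.coe_filter, mem_occurrences, Set.mem_ofPred_eq] at hi ⊢
    obtain ⟨⟨-, hocc⟩, hnt⟩ := hi
    have hiL := ((occursAt_iff_getD hw).mp hocc).1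
    have hav : ∀ t < w.length, i + t ∉ ({a, b} : Finset ℕ) := fun t ht => by simp; omega
    have := hJ i
    exact ⟨⟨by omega, (occursAt_deleteIdxs_junction_iff hw hiL hav).mpr hocc⟩, by omega⟩
  · intro j hj
    simp only [Finset.coe_filter, mem_occurrences, Set.mem_ofPred_eq] at hj ⊢
    obtain ⟨⟨-, hocc⟩, hns⟩ := hj
    have hjL := ((occursAt_iff_getD hw).mp hocc).1
    obtain ⟨m, hm⟩ : ∃ m, m = if j < a then j else if j + 1 < b then j + 1 else j + 2 := ⟨_, rfl⟩
    rw [← hm]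
    have := hJ m
    obtain ⟨hJm, hmL, hav⟩ : junction {a, b} m = j ∧ m + w.length ≤ x.length ∧
        ∀ t < w.length, m + t ∉ ({a, b} : Finset ℕ) := by
      split_ifs at hm <;> exact ⟨by omega, by omega, fun t ht => by simp; omega⟩
    rw [← hJm] at hocc
    refine ⟨⟨by omega, (occursAt_deleteIdxs_junction_iff hw hmL hav).mp hocc⟩, ?_⟩
    split_ifs at hm <;> omega
  · intro i hi
    simp only [Finset.coe_filter, mem_occurrences, Set.mem_ofPred_eq] at hi
    have := hJ i
    dsimp only
    split_ifs <;> omega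
  · intro j hj
    simp only [Finset.coe_filter, mem_occurrences, Set.mem_ofPred_eq] at hj
    dsimp only
    split_ifs
    · exact (hJ j).1 (by omega)
    · have := (hJ (j + 1)).2.1 (by omega) (by omega); omega
    · have := (hJ (j + 2)).2.2 (by omega); omega

theorem Nw_add_card_spanningAt {w x : List Bool} {k₀ k₁ : ℕ} (hw : w ≠ []) (hne : k₀ ≠ k₁)
    (h₀ : k₀ < x.length) (h₁ : k₁ < x.length) :
    Nw w x + (spanningAt w (deleteIdxs x {k₀, k₁}) (junction {k₀, k₁} k₀) ∪
        spanningAt w (deleteIdxs x {k₀, k₁}) (junction {k₀, k₁} k₁)).card =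
      Nw w (deleteIdxs x {k₀, k₁}) + (touchingAt w x k₀ ∪ touchingAt w x k₁).card := by
  wlog hlt : k₀ < k₁ generalizing k₀ k₁
  · rw [Finset.pair_comm, Finset.union_comm, Finset.union_comm (touchingAt w x k₀)]
    exact this hne.symm h₁ h₀ (by omega)
  have hu₀ : junction {k₀, k₁} k₀ = k₀ := (junction_pair_of_lt hlt k₀).1 le_rfl
  have hu₁ : junction {k₀, k₁} k₁ = k₁ - 1 := (junction_pair_of_lt hlt k₁).2.1 hlt le_rfl
  have hx := Finset.card_filter_add_card_filter_not (s := occurrences w x)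
    (p := fun i => (i ≤ k₀ ∧ k₀ < i + w.length) ∨ (i ≤ k₁ ∧ k₁ < i + w.length))
  have hy := Finset.card_filter_add_card_filter_not (s := occurrences w (deleteIdxs x {k₀, k₁}))
    (p := fun j => (j < k₀ ∧ k₀ < j + w.length) ∨ (j < k₁ - 1 ∧ k₁ - 1 < j + w.length))
  have hbij := card_filter_occurrences_deleteIdxs_pair hw hlt h₁
  rw [Finset.filter_or] at hx hy
  rw [Nw_eq_card_occurrences, Nw_eq_card_occurrences, hu₀, hu₁]
  unfold spanningAt touchingAt
  omega

theorem card_touchingAt_le (w x : List Bool) (k : ℕ) : (touchingAt w x k).card ≤ w.length := by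
  calc (touchingAt w x k).card ≤ (Finset.Ico (k + 1 - w.length) (k + 1)).card := by
        refine Finset.card_le_card fun i hi => ?_
        simp only [touchingAt, Finset.mem_filter, Finset.mem_Ico] at hi ⊢
        omega
    _ ≤ w.length := by simp only [Nat.card_Ico]; omega

theorem card_spanningAt_le (w y : List Bool) (u : ℕ) : (spanningAt w y u).card ≤ w.length - 1 := by
  calc (spanningAt w y u).card ≤ (Finset.Ico (u + 1 - w.length) u).card := by
        refine Finset.card_le_card fun j hj => ?_
        simp only [spanningAt, Finset.mem_filter, Finset.mem_Ico] at hj ⊢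
        omega
    _ ≤ w.length - 1 := by simp only [Nat.card_Ico]; omega

theorem touchingAt_replicate_eq_empty {x : List Bool} {L k : ℕ} {v : Bool}
    (hk : x.getD k false ≠ v) : touchingAt (List.replicate L v) x k = ∅ := by
  refine Finset.eq_empty_of_forall_notMem fun i hi => ?_
  simp only [touchingAt, Finset.mem_filter, mem_occurrences, List.length_replicate] at hi
  obtain ⟨⟨-, hocc⟩, hik, hki⟩ := hi
  exact hk (((occursAt_replicate_iff (by omega)).mp hocc).2 k hik hki)

theorem touchingAt_replicate_eq_empty_of_isolated {x : List Bool} {L k : ℕ} {v : Bool}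
    (hL : 2 ≤ L) (hl : x.getD (k - 1) false ≠ v) (hr : x.getD (k + 1) false ≠ v) :
    touchingAt (List.replicate L v) x k = ∅ := by
  refine Finset.eq_empty_of_forall_notMem fun i hi => ?_
  simp only [touchingAt, Finset.mem_filter, mem_occurrences, List.length_replicate] at hi
  obtain ⟨⟨-, hocc⟩, hik, hki⟩ := hi
  have hrun := ((occursAt_replicate_iff (by omega)).mp hocc).2
  rcases hik.lt_or_eq with hik | rfl
  · exact hl (hrun (k - 1) (by omega) (by omega))
  · exact hr (hrun (i + 1) (by omega) (by omega))

theorem spanningAt_replicate_eq_empty {y : List Bool} {L u : ℕ} {v : Bool}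
    (hu : y.getD u false ≠ v) : spanningAt (List.replicate L v) y u = ∅ := by
  refine Finset.eq_empty_of_forall_notMem fun j hj => ?_
  simp only [spanningAt, Finset.mem_filter, mem_occurrences, List.length_replicate] at hj
  obtain ⟨⟨-, hocc⟩, hju, huj⟩ := hj
  exact hu (((occursAt_replicate_iff (by omega)).mp hocc).2 u hju.le huj)

theorem preserved_of_touchingAt_spanningAt_eq_empty {w x : List Bool} {S : Finset ℕ}
    (hS : ∀ k ∈ S, k < x.length) (hT : ∀ k ∈ S, touchingAt w x k = ∅)
    (hU : ∀ k ∈ S, spanningAt w (deleteIdxs x S) (junction S k) = ∅) :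
    Preserved w x (deleteIdxs x S) := by
  refine ⟨S, hS, ?_, rfl, fun i hocc k hk hik => ?_, fun j hocc k hk hjk => ?_⟩
  · have h := junction_add_card_filter_lt S x.length
    rw [Finset.filter_true_of_mem hS] at h
    rw [length_deleteIdxs]
    omega
  · have hi : i ∈ touchingAt w x k := by
      simp only [touchingAt, Finset.mem_filter, mem_occurrences]
      exact ⟨⟨by linarith [hS k hk], hocc⟩, hik⟩
    simp [hT k hk] at hi
  · have hlen := hocc.length_le
    rw [List.length_drop] at hlen
    have hj : j ∈ spanningAt w (deleteIdxs x S) (junction S k) := by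
      simp only [spanningAt, Finset.mem_filter, mem_occurrences]
      exact ⟨⟨by omega, hocc⟩, hjk⟩
    simp [hU k hk] at hj

theorem Finset.card_lt_card_of_forall_mem_add_one_mem {s t : Finset ℕ} (hs : s.Nonempty)
    (h : ∀ i ∈ s, i ∈ t ∧ i + 1 ∈ t) : s.card < t.card := by
  have hmax : s.max' hs + 1 ∉ s := fun hmem => by
    have := s.le_max' _ hmem
    omega
  calc s.card < (insert (s.max' hs + 1) s).card := by
        rw [Finset.card_insert_of_notMem hmax]; omega
    _ ≤ t.card := Finset.card_le_card <| Finset.insert_subset (h _ (s.max'_mem hs)).2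
        fun i hi => (h i hi).1

theorem mem_touchingAt_of_mem_spanningAt {x : List Bool} {k₀ k₁ L j : ℕ} {v : Bool}
    (hne : k₀ ≠ k₁) (h₀ : k₀ < x.length) (h₁ : k₁ < x.length) (hv : x.getD k₀ false = v)
    (hj : j ∈ spanningAt (List.replicate L v) (deleteIdxs x {k₀, k₁}) (junction {k₀, k₁} k₀))
    (hj₁ : ¬(j < junction {k₀, k₁} k₁ ∧ junction {k₀, k₁} k₁ < j + L)) :
    j + (k₀ - junction {k₀, k₁} k₀) ∈ touchingAt (List.replicate L v) x k₀ ∧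
      j + (k₀ - junction {k₀, k₁} k₀) + 1 ∈ touchingAt (List.replicate L v) x k₀ := by
  simp only [spanningAt, Finset.mem_filter, mem_occurrences, List.length_replicate] at hj
  obtain ⟨⟨-, hocc⟩, hju, huj⟩ := hj
  obtain ⟨hjL, hrun⟩ := (occursAt_replicate_iff (by omega)).mp hocc
  have hy := length_deleteIdxs_pair hne h₀ h₁
  have hu := junction_pair_self hne
  have hmem : ∀ m, m ∉ ({k₀, k₁} : Finset ℕ) ↔ m ≠ k₀ ∧ m ≠ k₁ := by simp
  have hx : ∀ m, j + (k₀ - junction {k₀, k₁} k₀) ≤ m →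
      m ≤ j + (k₀ - junction {k₀, k₁} k₀) + L → x.getD m false = v := by
    intro m hm₁ hm₂
    rcases lt_trichotomy m k₀ with hm | rfl | hm
    · have hadd : junction {k₀, k₁} (m + (k₀ - m)) = junction {k₀, k₁} m + (k₀ - m) :=
        junction_add fun s hs => (hmem _).mpr (by omega)
      rw [Nat.add_sub_cancel' hm.le] at hadd
      rw [← getD_deleteIdxs_junction ((hmem m).mpr (by omega)) (by omega)]
      exact hrun _ (by omega) (by omega)
    · exact hv
    · have hadd : junction {k₀, k₁} (k₀ + 1 + (m - k₀ - 1)) =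
          junction {k₀, k₁} (k₀ + 1) + (m - k₀ - 1) :=
        junction_add fun s hs => (hmem _).mpr (by omega)
      rw [junction_succ, if_pos (by simp), show k₀ + 1 + (m - k₀ - 1) = m by omega] at hadd
      rw [← getD_deleteIdxs_junction ((hmem m).mpr (by omega)) (by omega)]
      exact hrun _ (by omega) (by omega)
  simp only [touchingAt, Finset.mem_filter, mem_occurrences, List.length_replicate,
    occursAt_replicate_iff (show 0 < L by omega)]
  refine ⟨⟨⟨by omega, by omega, fun m hm₁ hm₂ => hx m hm₁ (by omega)⟩, by omega, by omega⟩,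
    ⟨⟨by omega, by omega, fun m hm₁ hm₂ => hx m (by omega) (by omega)⟩, by omega, by omega⟩⟩

theorem card_spanningAt_lt_card_touchingAt {x : List Bool} {k₀ k₁ L : ℕ} {v : Bool}
    (hne : k₀ ≠ k₁) (h₀ : k₀ < x.length) (h₁ : k₁ < x.length) (hv : x.getD k₀ false = v)
    (hU₁ : spanningAt (List.replicate L v) (deleteIdxs x {k₀, k₁}) (junction {k₀, k₁} k₁) = ∅)
    (hU₀ : (spanningAt (List.replicate L v) (deleteIdxs x {k₀, k₁}) (junction {k₀, k₁} k₀)).Nonempty) :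
    (spanningAt (List.replicate L v) (deleteIdxs x {k₀, k₁}) (junction {k₀, k₁} k₀)).card <
      (touchingAt (List.replicate L v) x k₀).card := by
  rw [← Finset.card_image_of_injective _ (add_left_injective (k₀ - junction {k₀, k₁} k₀))]
  refine Finset.card_lt_card_of_forall_mem_add_one_mem (hU₀.image _) fun i hi => ?_
  obtain ⟨j, hj, rfl⟩ := Finset.mem_image.mp hi
  refine mem_touchingAt_of_mem_spanningAt hne h₀ h₁ hv hj fun hspan => ?_
  have hj₁ : j ∈ spanningAt (List.replicate L v) (deleteIdxs x {k₀, k₁}) (junction {k₀, k₁} k₁) := by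
    simp only [spanningAt, Finset.mem_filter, List.length_replicate] at hj ⊢
    exact ⟨hj.1, hspan⟩
  simp [hU₁] at hj₁

theorem getD_neighbors_of_mem_spanningAt {x : List Bool} {k₀ k₁ L j : ℕ} {v : Bool}
    (hne : k₀ ≠ k₁) (h₀ : k₀ < x.length) (h₁ : k₁ < x.length) (hv : x.getD k₀ false = v)
    (hj : j ∈ spanningAt (List.replicate L v) (deleteIdxs x {k₀, k₁}) (junction {k₀, k₁} k₁)) :
    x.getD (k₁ - 1) false = v ∧ x.getD (k₁ + 1) false = v := by
  simp only [spanningAt, Finset.mem_filter, mem_occurrences, List.length_replicate] at hj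
  obtain ⟨⟨-, hocc⟩, hju, huj⟩ := hj
  obtain ⟨hjL, hrun⟩ := (occursAt_replicate_iff (by omega)).mp hocc
  have hy := length_deleteIdxs_pair hne h₀ h₁
  have hu := junction_pair_self hne
  constructor
  · by_cases hk : k₁ - 1 = k₀
    · rwa [hk]
    have hnot : k₁ - 1 ∉ ({k₀, k₁} : Finset ℕ) := by simp; omega
    have hsucc := junction_succ {k₀, k₁} (k₁ - 1)
    rw [if_neg hnot, Nat.sub_add_cancel (by omega)] at hsucc
    rw [← getD_deleteIdxs_junction hnot (by omega)]
    exact hrun _ (by omega) (by omega)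
  · by_cases hk : k₁ + 1 = k₀
    · rwa [hk]
    have hnot : k₁ + 1 ∉ ({k₀, k₁} : Finset ℕ) := by simp; omega
    have hsucc := junction_succ {k₀, k₁} k₁
    rw [if_pos (by simp)] at hsucc
    rw [← getD_deleteIdxs_junction hnot (by omega)]
    exact hrun _ (by omega) (by omega)

theorem spanningAt_w0000_junction_eq_empty {x : List Bool} {k₀ k₁ : ℕ} (hne : k₀ ≠ k₁)
    (h₀ : k₀ < x.length) (h₁ : k₁ < x.length)
    (hv₀ : x.getD k₀ false = false)
    (hm₁ : Nw w1111 x ≡ Nw w1111 (deleteIdxs x {k₀, k₁}) + 1 [MOD 7]) :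
    spanningAt w0000 (deleteIdxs x {k₀, k₁}) (junction {k₀, k₁} k₁) = ∅ := by
  rw [show w0000 = List.replicate 4 false from rfl]
  rw [show w1111 = List.replicate 4 true from rfl] at hm₁
  refine Finset.eq_empty_of_forall_notMem fun j hj => ?_
  obtain ⟨hl, hr⟩ := getD_neighbors_of_mem_spanningAt hne h₀ h₁ hv₀ hj
  have hu₁ : (deleteIdxs x {k₀, k₁}).getD (junction {k₀, k₁} k₁) false = false := by
    simp only [spanningAt, Finset.mem_filter, mem_occurrences] at hj
    exact ((occursAt_replicate_iff (by norm_num)).mp hj.1.2).2 _ hj.2.1.le hj.2.2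
  have hcount := Nw_add_card_spanningAt (w := List.replicate 4 true) (by simp) hne h₀ h₁
  rw [touchingAt_replicate_eq_empty (by rw [hv₀]; decide),
    touchingAt_replicate_eq_empty_of_isolated le_add_self (by rw [hl]; decide) (by rw [hr]; decide),
    spanningAt_replicate_eq_empty (u := junction {k₀, k₁} k₁) (by rw [hu₁]; decide)] at hcount
  have := card_spanningAt_le (List.replicate 4 true) (deleteIdxs x {k₀, k₁}) (junction {k₀, k₁} k₀)
  simp only [Finset.union_empty, Finset.card_empty, List.length_replicate] at hcount this
  unfold Nat.ModEq at hm₁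
  omega

/-- If a `0` and a `1` are deleted with `N₁₁₁₁(x) - N₁₁₁₁(y) ≡ 1 (mod 7)` and
`N₀₀₀₀(x) ≡ N₀₀₀₀(y) (mod 7)`, then `0000` is preserved. -/
theorem zero_one_0000_preserved (x y : List Bool) (k₀ k₁ : ℕ) (hne : k₀ ≠ k₁)
    (h0 : k₀ < x.length) (h1 : k₁ < x.length)
    (hv0 : x.getD k₀ false = false) (hv1 : x.getD k₁ false = true)
    (hy : y = deleteIdxs x ({k₀, k₁} : Finset ℕ))
    (hm1 : Nw w1111 x ≡ Nw w1111 y + 1 [MOD 7])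
    (hm0 : Nw w0000 x ≡ Nw w0000 y [MOD 7]) :
    Preserved w0000 x y := by
  subst hy
  have hU₁ := spanningAt_w0000_junction_eq_empty hne h0 h1 hv0 hm1
  rw [show w0000 = List.replicate 4 false from rfl] at hm0 hU₁ ⊢
  have hT₁ : touchingAt (List.replicate 4 false) x k₁ = ∅ :=
    touchingAt_replicate_eq_empty (by rw [hv1]; decide)
  have hcount := Nw_add_card_spanningAt (w := List.replicate 4 false) (by simp) hne h0 h1
  rw [hU₁, hT₁, Finset.union_empty, Finset.union_empty] at hcount
  have hT₀le : (touchingAt (List.replicate 4 false) x k₀).card ≤ 4 := card_touchingAt_le _ x k₀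
  unfold Nat.ModEq at hm0
  -- a spanning `0000` would force `1 ≤ |T₀| - |S₀| ≤ 4`, while the counts agree mod 7
  have hU₀ : spanningAt (List.replicate 4 false) (deleteIdxs x {k₀, k₁})
      (junction {k₀, k₁} k₀) = ∅ := by
    by_contra hne₀
    have := card_spanningAt_lt_card_touchingAt hne h0 h1 hv0 hU₁
      (Finset.nonempty_iff_ne_empty.mpr hne₀)
    omega
  have hT₀ : touchingAt (List.replicate 4 false) x k₀ = ∅ := by
    rw [hU₀, Finset.card_empty] at hcount
    exact Finset.card_eq_zero.mp (by omega)
  refine preserved_of_touchingAt_spanningAt_eq_empty ?_ ?_ ?_ <;>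
    simp only [Finset.mem_insert, Finset.mem_singleton, forall_eq_or_imp, forall_eq]
  exacts [⟨h0, h1⟩, ⟨hT₀, hT₁⟩, ⟨hU₀, hU₁⟩]
end

section
/- Let x be a binary string and let y be obtained from x by deleting a single symbol 0 that constitutes a run of length 1 in x. If this deletion creates or destroys an occurrence of 110011 (i.e., the deleted position lies inside an occurrence of 110011 in x, or some occurrence of 110011 in y spans the deletion junction) and moreover creates an occurrence of 1111, then the string 11011 is preserved from x to y, and the sequences τ_{≥2}(x) and τ_{≥2}(y) have the same length and differ in exactly one coordinate (Hamming distance 1). -/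
/-! Write `x = p ++ 0 :: q`, so that `y = p ++ q`. An occurrence of a word `w` that contains the
deleted position, or that spans the junction in `y`, splits as `w = u ++ v` with `u` a suffix of `p`
and `v` a prefix of `0 :: q`, resp. of `q`. Since any two suffixes of `p` (prefixes of `q`) are
comparable, the created `1111` and the `110011` leave only two possible neighbourhoods of
the deleted zero, `111·0·10011` and `11001·0·111` (a `110011` through the deleted zero is
impossible, as that zero lies between two ones), and a finite check shows that no `11011`
touches the deletion in either. In both neighbourhoods the deletion merges a run of at least two
ones with an isolated one, so exactly one entry of `τ≥2` changes, from `a` to `a + 1`. -/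

open List

theorem deleteIdxs_singleton_s15 (x : List Bool) (k : ℕ) :
    deleteIdxs x {k} = x.take k ++ x.drop (k + 1) := by
  have hfilter : (range x.length).filter (fun i => decide (i ∉ ({k} : Finset ℕ))) =
      (range x.length).erase k := by
    rw [nodup_range.erase_eq_filter]
    congr
    funext i
    cases h : decide (i = k) <;> simp_all
  rw [deleteIdxs, hfilter, erase_range]
  apply ext_getElem <;> simp <;> grind

theorem junction_singleton (k : ℕ) : junction {k} k = k := by
  rw [junction, Finset.filter_true_of_mem (by simp +contextual [Nat.ne_of_lt]),
    Finset.card_range]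

theorem preserved_append_cons {w p q : List Bool} {c : Bool}
    (hx : ∀ i, occursAt w (p ++ c :: q) i → ¬ (i ≤ p.length ∧ p.length < i + w.length))
    (hy : ∀ j, occursAt w (p ++ q) j → ¬ (j < p.length ∧ p.length < j + w.length)) :
    Preserved w (p ++ c :: q) (p ++ q) := by
  refine ⟨{p.length}, by simp, by simp; omega, ?_, ?_, ?_⟩
  · simp [deleteIdxs_singleton_s15]
  · simpa using hx
  · simpa [junction_singleton] using hy

theorem occursAt_append {w p q : List Bool} {j : ℕ} (h : occursAt w (p ++ q) j)
    (hj : j ≤ p.length) (hjw : p.length ≤ j + w.length) :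
    w.take (p.length - j) <:+ p ∧ w.drop (p.length - j) <+: q := by
  rw [occursAt, drop_append_of_le_length hj, prefix_iff_eq_take] at h
  have hn : (p.drop j).length = p.length - j := length_drop
  rw [h]
  constructor
  · rw [take_take, min_eq_left (by omega), take_left' hn]
    exact drop_suffix _ _
  · rw [drop_take, drop_left' hn]
    exact take_prefix _ _

def SplitCompatible (w : List Bool) (n : ℕ) (P Q : List Bool) : Prop :=
  (w.take n <:+ P ∨ P <:+ w.take n) ∧ (w.drop n <+: Q ∨ Q <+: w.drop n)

instance (w : List Bool) (n : ℕ) (P Q : List Bool) : Decidable (SplitCompatible w n P Q) := by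
  unfold SplitCompatible; infer_instance

theorem splitCompatible_of_suffix_of_prefix {w p q P Q : List Bool} {n : ℕ}
    (hw₁ : w.take n <:+ p) (hw₂ : w.drop n <+: q) (hP : P <:+ p) (hQ : Q <+: q) :
    SplitCompatible w n P Q :=
  ⟨suffix_or_suffix_of_suffix hw₁ hP, prefix_or_prefix_of_prefix hw₂ hQ⟩

theorem splitCompatible_of_occursAt_append {w p q P Q : List Bool} {j : ℕ}
    (h : occursAt w (p ++ q) j) (hj : j ≤ p.length) (hjw : p.length ≤ j + w.length)
    (hP : P <:+ p) (hQ : Q <+: q) : SplitCompatible w (p.length - j) P Q :=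
  splitCompatible_of_suffix_of_prefix (occursAt_append h hj hjw).1 (occursAt_append h hj hjw).2
    hP hQ

theorem tau1_append {l m : List Bool} (h : ∀ a ∈ l.getLast?, ∀ b ∈ m.head?, a ≠ b) :
    tau1 (l ++ m) = tau1 l ++ tau1 m := by
  rw [tau1, splitBy_append (by simpa using h)]
  simp [tau1]

theorem tau1_singleton_false : tau1 [false] = [] := rfl

theorem tau1_replicate_true {n : ℕ} (hn : 0 < n) : tau1 (replicate n true) = [n] := by
  rw [tau1, splitBy_of_isChain (by simpa using hn.ne') (isChain_replicate_of_rel n rfl)]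
  obtain ⟨n, rfl⟩ := Nat.exists_eq_add_one_of_ne_zero hn.ne'
  simp [replicate_succ, filter_cons]

theorem tau1_append_replicate_true_append {A B : List Bool} {n : ℕ} (hn : 0 < n)
    (hA : true ∉ A.getLast?) (hB : true ∉ B.head?) :
    tau1 (A ++ replicate n true ++ B) = tau1 A ++ n :: tau1 B := by
  obtain ⟨n, rfl⟩ := Nat.exists_eq_add_one_of_ne_zero hn.ne'
  rw [tau1_append, tau1_append, tau1_replicate_true hn]
  · simp
  all_goals simp_all [getLast?_append, getLast?_replicate, head?_replicate]

theorem tau1_false_cons_replicate_true_append {B : List Bool} {n : ℕ} (hn : 0 < n)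
    (hB : true ∉ B.head?) : tau1 (false :: (replicate n true ++ B)) = n :: tau1 B := by
  simpa [tau1_singleton_false] using
    tau1_append_replicate_true_append (A := [false]) hn (by simp) hB

theorem exists_eq_replicate_true_append {n : ℕ} {q : List Bool} (h : replicate n true <+: q) :
    ∃ c B, n ≤ c ∧ q = replicate c true ++ B ∧ true ∉ B.head? := by
  induction q generalizing n with
  | nil => exact ⟨0, [], by simpa using h, rfl, by simp⟩
  | cons b q ih =>
    cases b
    · refine ⟨0, false :: q, ?_, rfl, by simp⟩
      cases n
      · rfl
      · simp [replicate_succ] at h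
    · obtain ⟨c, B, hc, rfl, hB⟩ := ih (n := n - 1) (by cases n <;> simp_all [replicate_succ])
      exact ⟨c + 1, B, by omega, rfl, hB⟩

theorem exists_eq_append_replicate_true {n : ℕ} {p : List Bool} (h : replicate n true <:+ p) :
    ∃ A a, n ≤ a ∧ p = A ++ replicate a true ∧ true ∉ A.getLast? := by
  rw [← reverse_prefix, reverse_replicate] at h
  obtain ⟨a, B, ha, hp, hB⟩ := exists_eq_replicate_true_append h
  refine ⟨B.reverse, a, ha, ?_, by simpa using hB⟩
  rw [← reverse_reverse p, hp]
  simp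

def DifferInOneCoord (l l' : List ℕ) : Prop :=
  l.length = l'.length ∧
    ((Finset.range l.length).filter (fun i => l.getD i 0 ≠ l'.getD i 0)).card = 1

theorem differInOneCoord_append_cons (L T : List ℕ) {m m' : ℕ} (h : m ≠ m') :
    DifferInOneCoord (L ++ m :: T) (L ++ m' :: T) := by
  refine ⟨by simp, Finset.card_eq_one.mpr ⟨L.length, ?_⟩⟩
  ext i
  simp only [Finset.mem_filter, Finset.mem_range, Finset.mem_singleton]
  rcases lt_trichotomy i L.length with hi | rfl | hi
  · simp [getElem?_append_left hi, hi.ne]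
  · simp [h]
  · obtain ⟨u, rfl⟩ : ∃ u, i = L.length + (u + 1) := ⟨i - L.length - 1, by omega⟩
    simp [getElem?_append_right]

theorem differInOneCoord_tauGe2_merge_left {p q : List Bool} (hp : [true, true] <:+ p) :
    DifferInOneCoord (tauGe2 (p ++ false :: true :: false :: q))
      (tauGe2 (p ++ true :: false :: q)) := by
  obtain ⟨A, a, ha, rfl, hA⟩ := exists_eq_append_replicate_true (n := 2) hp
  have hx : tau1 (A ++ replicate a true ++ false :: true :: false :: q) =
      tau1 A ++ a :: 1 :: tau1 (false :: q) := by
    rw [tau1_append_replicate_true_append (by omega) hA (by simp),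
      ← tau1_false_cons_replicate_true_append (n := 1) one_pos (by simp)]
    rfl
  have hy : tau1 (A ++ replicate a true ++ true :: false :: q) =
      tau1 A ++ (a + 1) :: tau1 (false :: q) := by
    rw [← tau1_append_replicate_true_append (by omega) hA (by simp)]
    simp [replicate_succ']
  simp only [tauGe2, hx, hy, filter_append, filter_cons, decide_eq_true_eq]
  rw [if_pos ha, if_neg (by norm_num), if_pos (by omega)]
  exact differInOneCoord_append_cons _ _ (by omega)

theorem differInOneCoord_tauGe2_merge_right {p q : List Bool} (hq : [true, true] <+: q) :
    DifferInOneCoord (tauGe2 (p ++ false :: true :: false :: q))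
      (tauGe2 (p ++ false :: true :: q)) := by
  obtain ⟨c, B, hc, rfl, hB⟩ := exists_eq_replicate_true_append (n := 2) hq
  have hx : tau1 (p ++ false :: true :: false :: (replicate c true ++ B)) =
      tau1 (p ++ [false]) ++ 1 :: c :: tau1 B := by
    rw [← tau1_false_cons_replicate_true_append (by omega) hB,
      ← tau1_append_replicate_true_append (n := 1) one_pos (by simp) (by simp)]
    simp
  have hy : tau1 (p ++ false :: true :: (replicate c true ++ B)) =
      tau1 (p ++ [false]) ++ (c + 1) :: tau1 B := by
    rw [← tau1_append_replicate_true_append (by omega) (by simp) hB]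
    simp [replicate_succ]
  simp only [tauGe2, hx, hy, filter_append, filter_cons, decide_eq_true_eq]
  rw [if_neg (by norm_num), if_pos hc, if_pos (by omega)]
  exact differInOneCoord_append_cons _ _ (by omega)

set_option synthInstance.maxSize 2000 in
theorem splitCompatible_w110011_w1111 : ∀ m < 4, ∀ n < 6, 0 < m → 0 < n →
    SplitCompatible w110011 n (w1111.take m) (w1111.drop m) →
      m = 3 ∧ n = 1 ∨ m = 1 ∧ n = 5 := by
  decide

theorem not_splitCompatible_w110011_w1111 : ∀ m < 4, ∀ n < 6, 0 < m →
    ¬ SplitCompatible w110011 n (w1111.take m) (false :: w1111.drop m) := by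
  decide

def JunctionShape (p q : List Bool) : Prop :=
  ([true, true, true] <:+ p ∧ [true, false, false, true, true] <+: q) ∨
    ([true, true, false, false, true] <:+ p ∧ [true, true, true] <+: q)

theorem junctionShape_of_occursAt {p q : List Bool}
    (h1111 : ∃ j, occursAt w1111 (p ++ q) j ∧ j < p.length ∧ p.length < j + w1111.length)
    (h110011 : (∃ i, occursAt w110011 (p ++ false :: q) i ∧ i ≤ p.length ∧
        p.length < i + w110011.length) ∨
      (∃ j, occursAt w110011 (p ++ q) j ∧ j < p.length ∧ p.length < j + w110011.length)) :
    JunctionShape p q := by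
  obtain ⟨j, hj, hjp, hpj⟩ := h1111
  obtain ⟨hP, hQ⟩ := occursAt_append hj hjp.le hpj.le
  have hm : p.length - j < 4 := by simp only [w1111, length_cons, length_nil] at hpj; omega
  rcases h110011 with ⟨i, hi, hip, hpi⟩ | ⟨i, hi, hip, hpi⟩
  · exact (not_splitCompatible_w110011_w1111 _ hm _ (by simp [w110011] at hpi; omega) (by omega)
      (splitCompatible_of_occursAt_append hi hip hpi.le hP (cons_prefix_cons.2 ⟨rfl, hQ⟩))).elim
  · obtain ⟨hP', hQ'⟩ := occursAt_append hi hip.le hpi.le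
    rcases splitCompatible_w110011_w1111 _ hm _ (by simp [w110011] at hpi; omega) (by omega)
      (by omega) (splitCompatible_of_suffix_of_prefix hP' hQ' hP hQ) with
      ⟨hm, hn⟩ | ⟨hm, hn⟩
    · rw [hm] at hP; rw [hn] at hQ'
      exact Or.inl ⟨hP, hQ'⟩
    · rw [hn] at hP'; rw [hm] at hQ
      exact Or.inr ⟨hP', hQ⟩

theorem preserved_w11011 {p q : List Bool} (h : JunctionShape p q) :
    Preserved w11011 (p ++ false :: q) (p ++ q) := by
  obtain ⟨P, Q, hP, hQ, hPQ⟩ : ∃ P Q, P <:+ p ∧ Q <+: q ∧ ∀ n < 5,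
      ¬ SplitCompatible w11011 n P (false :: Q) ∧ ¬ SplitCompatible w11011 n P Q := by
    rcases h with ⟨hP, hQ⟩ | ⟨hP, hQ⟩
    exacts [⟨_, _, hP, hQ, by decide⟩, ⟨_, _, hP, hQ, by decide⟩]
  apply preserved_append_cons
  · rintro i hi ⟨hip, hpi⟩
    exact (hPQ _ (by simp [w11011] at hpi; omega)).1
      (splitCompatible_of_occursAt_append hi hip hpi.le hP (cons_prefix_cons.2 ⟨rfl, hQ⟩))
  · rintro i hi ⟨hip, hpi⟩
    exact (hPQ _ (by simp [w11011] at hpi; omega)).2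
      (splitCompatible_of_occursAt_append hi hip.le hpi.le hP hQ)

theorem differInOneCoord_tauGe2 {p q : List Bool} (h : JunctionShape p q) :
    DifferInOneCoord (tauGe2 (p ++ false :: q)) (tauGe2 (p ++ q)) := by
  rcases h with ⟨⟨p', rfl⟩, ⟨q', rfl⟩⟩ | ⟨⟨p', rfl⟩, ⟨q', rfl⟩⟩
  · simpa using differInOneCoord_tauGe2_merge_left (p := p' ++ [true, true, true])
      (q := [false, true, true] ++ q') (suffix_append_of_suffix (by decide))
  · simpa using differInOneCoord_tauGe2_merge_right (p := p' ++ [true, true, false])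
      (q := [true, true, true] ++ q') (prefix_append_of_prefix (by decide))

theorem claim_if1101110112_general (x y : List Bool) (k : ℕ) (hk : k < x.length)
    (hval : x.getD k false = false)
    (hy : y = deleteIdxs x ({k} : Finset ℕ))
    (h110011 : (∃ i, occursAt w110011 x i ∧ i ≤ k ∧ k < i + w110011.length) ∨
      (∃ j, occursAt w110011 y j ∧ j < k ∧ k < j + w110011.length))
    (h1111created : ∃ j, occursAt w1111 y j ∧ j < k ∧ k < j + w1111.length) :
    Preserved w11011 x y ∧ (tauGe2 x).length = (tauGe2 y).length ∧
    ((Finset.range (tauGe2 x).length).filter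
      (fun i => (tauGe2 x).getD i 0 ≠ (tauGe2 y).getD i 0)).card = 1 := by
  obtain ⟨p, q, rfl, rfl⟩ : ∃ p q, x = p ++ false :: q ∧ k = p.length := by
    refine ⟨x.take k, x.drop (k + 1), ?_, by simp; omega⟩
    rw [getD_eq_getElem _ _ hk] at hval
    rw [← hval, getElem_cons_drop, take_append_drop]
  obtain rfl : y = p ++ q := by simp [hy, deleteIdxs_singleton_s15]
  have h := junctionShape_of_occursAt h1111created h110011
  exact ⟨preserved_w11011 h, differInOneCoord_tauGe2 h⟩

/-- Claim 3: if deleting a `0` that constitutes a run of length 1 creates or destroys a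
`110011` and creates a `1111`, then `11011` is preserved and `τ≥2(x)`, `τ≥2(y)` have the
same length and differ in exactly one coordinate. -/
theorem claim_if1101110112 (x y : List Bool) (k : ℕ) (hk : k < x.length)
    (hval : x.getD k false = false) (hrun : runAt x k 1)
    (hy : y = deleteIdxs x ({k} : Finset ℕ))
    (h110011 : (∃ i, occursAt w110011 x i ∧ i ≤ k ∧ k < i + w110011.length) ∨
      (∃ j, occursAt w110011 y j ∧ j < k ∧ k < j + w110011.length))
    (h1111created : ∃ j, occursAt w1111 y j ∧ j < k ∧ k < j + w1111.length) :
    Preserved w11011 x y ∧ (tauGe2 x).length = (tauGe2 y).length ∧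
    ((Finset.range (tauGe2 x).length).filter
      (fun i => (tauGe2 x).getD i 0 ≠ (tauGe2 y).getD i 0)).card = 1 :=
  claim_if1101110112_general x y k hk hval hy h110011 h1111created
end
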